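/- Let H be an RKHS over ℝⁿ of C¹ functions, a ∈ ℝ, and γ : [0,T] → ℝⁿ a trajectory with γ̇ = f(γ). Then Γ_γ ∈ D(A_{f,a}*) and A_{f,a}* Γ_γ = K(·, aγ(T)) − K(·, aγ(0)), where A_{f,a} g(x) = a ∇g(ax) · f(x) is the scaled Liouville operator. -/

import Mathlib

open RealInnerProductSpace

/-! Along the trajectory, `A_{f,a} g (γ t)` is the time derivative of `t ↦ g (a γ(t))` by the
chain rule, so pairing `A_{f,a} g` with the occupation kernel integrates a derivative, and the
fundamental theorem of calculus leaves `g (a γ(T)) - g (a γ(0))`. -/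

theorem HasGradientAt.comp_hasDerivAt {F : Type*} [NormedAddCommGroup F] [InnerProductSpace ℝ F]
    [CompleteSpace F] {φ : F → ℝ} {φ' : F} {c : ℝ → F} {c' : F} {t : ℝ}
    (hφ : HasGradientAt φ φ' (c t)) (hc : HasDerivAt c c' t) :
    HasDerivAt (fun s => φ (c s)) ⟪φ', c'⟫ t := by
  have hchain := hφ.hasFDerivAt.comp_hasDerivAt t hc
  rwa [InnerProductSpace.toDual_apply_apply] at hchain

section ScaledLiouville

variable {E H : Type*} [NormedAddCommGroup E] [InnerProductSpace ℝ E] [CompleteSpace E]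
  [NormedAddCommGroup H] [InnerProductSpace ℝ H]
  {k : E → H} {grad : H → E → E} {a : ℝ} {f : E → E} {γ : ℝ → E} {g h : H}

theorem hasDerivAt_inner_kernel_smul_of_liouville {t : ℝ}
    (hgrad : HasGradientAt (fun y => ⟪g, k y⟫) (grad g (a • γ t)) (a • γ t))
    (hγ : HasDerivAt γ (f (γ t)) t)
    (hh : ∀ x, ⟪h, k x⟫ = a * ⟪grad g (a • x), f x⟫) :
    HasDerivAt (fun s => ⟪g, k (a • γ s)⟫) ⟪h, k (γ t)⟫ t := by
  have hchain := hgrad.comp_hasDerivAt (hγ.const_smul a)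
  rwa [real_inner_smul_right, ← hh] at hchain

theorem integral_inner_kernel_of_liouville {T : ℝ} (hT : 0 ≤ T)
    (hgrad : ∀ (g : H), ∀ x, HasGradientAt (fun y => ⟪g, k y⟫) (grad g x) x)
    (hγ : ∀ t ∈ Set.Icc 0 T, HasDerivAt γ (f (γ t)) t)
    (hh : ∀ x, ⟪h, k x⟫ = a * ⟪grad g (a • x), f x⟫) :
    ∫ t in 0..T, ⟪h, k (γ t)⟫ = ⟪g, k (a • γ T)⟫ - ⟪g, k (a • γ 0)⟫ := by
  rw [← Set.uIcc_of_le hT] at hγ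
  have hderiv : ∀ t ∈ Set.uIcc 0 T, HasDerivAt (fun s => ⟪g, k (a • γ s)⟫) ⟪h, k (γ t)⟫ t :=
    fun t ht => hasDerivAt_inner_kernel_smul_of_liouville (hgrad g _) (hγ t ht) hh
  have hcont_h : Continuous fun x => ⟪h, k x⟫ :=
    continuous_iff_continuousAt.2 fun x => (hgrad h x).differentiableAt.continuousAt
  have hcont_γ : ContinuousOn γ (Set.uIcc 0 T) := fun t ht =>
    (hγ t ht).continuousAt.continuousWithinAt
  exact intervalIntegral.integral_eq_sub_of_hasDerivAt hderiv
    (hcont_h.comp_continuousOn hcont_γ).intervalIntegrable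

end ScaledLiouville

/-- The occupation kernel `Γγ` of a trajectory `γ` of `ẋ = f(x)` lies in the
domain of the adjoint of the scaled Liouville operator
`A_{f,a} g (x) = a ∇g(ax) · f(x)`, with `A_{f,a}* Γγ = K(·, aγ(T)) − K(·, aγ(0))`.
The RKHS of C¹ functions on `ℝⁿ` is modeled by kernel vectors `k`
(so `g(x) = ⟪g, k x⟫`), each `g ∈ H` having gradient `grad g`.  Membership of
`Γγ` in `D(A_{f,a}*)` and the adjoint formula are expressed as: for every `g`
in the domain of `A_{f,a}` (witnessed by `h = A_{f,a} g ∈ H`),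
`⟪A_{f,a} g, Γγ⟫ = ⟪g, k (a γ(T)) − k (a γ(0))⟫`. -/
theorem stmt_7 {n : ℕ} {H : Type*} [NormedAddCommGroup H] [InnerProductSpace ℝ H]
    (k : EuclideanSpace ℝ (Fin n) → H)
    (grad : H → EuclideanSpace ℝ (Fin n) → EuclideanSpace ℝ (Fin n))
    (hgrad : ∀ (g : H), ∀ x, HasGradientAt (fun y => ⟪g, k y⟫) (grad g x) x)
    (a : ℝ)
    (f : EuclideanSpace ℝ (Fin n) → EuclideanSpace ℝ (Fin n))
    (γ : ℝ → EuclideanSpace ℝ (Fin n)) (T : ℝ) (hT : 0 ≤ T)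
    (hγ : ∀ t ∈ Set.Icc (0:ℝ) T, HasDerivAt γ (f (γ t)) t)
    (Γγ : H) (hΓ : ∀ g : H, ⟪g, Γγ⟫ = ∫ t in (0:ℝ)..T, ⟪g, k (γ t)⟫) :
    ∀ g h : H, (∀ x, ⟪h, k x⟫ = a * ⟪grad g (a • x), f x⟫) →
      ⟪h, Γγ⟫ = ⟪g, k (a • γ T) - k (a • γ 0)⟫ := by
  intro g h hh
  rw [hΓ h, integral_inner_kernel_of_liouville hT hgrad hγ hh, inner_sub_right]
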